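/- Let (S, γ) be a Riemannian manifold, ς a one-form on S, and D the Levi-Civita connection. Under the replacement ς ↦ ς̃ = ς + φ^{-1}dφ for a smooth positive function φ on S, a function f solves (D_A D_B - 2ς_{(A}D_{B)} - D_{(A}ς_{B)} + ς_A ς_B - (1/2)R_{AB} + (Λ/(n-1))γ_{AB}) f = 0 if and only if f̃ := φ·f solves the same equation with ς replaced by ς̃. -/

import Mathlib

noncomputable section

/-- Partial derivative `∂_A f` in coordinates on `ℝ^d`. -/
def pd {d : ℕ} (f : EuclideanSpace ℝ (Fin d) → ℝ) (A : Fin d)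
    (x : EuclideanSpace ℝ (Fin d)) : ℝ :=
  fderiv ℝ f x (EuclideanSpace.single A 1)

/-- Coordinate Hessian `∂_A ∂_B f`. -/
def hess {d : ℕ} (f : EuclideanSpace ℝ (Fin d) → ℝ) (A B : Fin d)
    (x : EuclideanSpace ℝ (Fin d)) : ℝ :=
  pd (fun y => pd f B y) A x

/-- Second covariant derivative `D_A D_B f` of a function w.r.t. Christoffel symbols `Γ`. -/
def covDDf {d : ℕ} (Γ : EuclideanSpace ℝ (Fin d) → Fin d → Fin d → Fin d → ℝ)
    (f : EuclideanSpace ℝ (Fin d) → ℝ) (A B : Fin d) (x : EuclideanSpace ℝ (Fin d)) : ℝ :=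
  hess f A B x - ∑ C, Γ x C A B * pd f C x

/-- Covariant derivative `D_A σ_B` of a one-form w.r.t. Christoffel symbols `Γ`. -/
def covDσ {d : ℕ} (Γ : EuclideanSpace ℝ (Fin d) → Fin d → Fin d → Fin d → ℝ)
    (σ : EuclideanSpace ℝ (Fin d) → Fin d → ℝ) (A B : Fin d)
    (x : EuclideanSpace ℝ (Fin d)) : ℝ :=
  pd (fun y => σ y B) A x - ∑ C, Γ x C A B * σ x C

/-- The master/KID operator
`(D_A D_B - 2ς_{(A}D_{B)} - D_{(A}ς_{B)} + ς_A ς_B - (1/2)R_{AB} + (Λ/(n-1))γ_{AB}) f`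
in coordinates, with Levi-Civita Christoffel symbols `Γ`, Ricci tensor `Ric` and metric `γ`. -/
def master (n : ℕ) (Λ : ℝ) {d : ℕ}
    (Γ : EuclideanSpace ℝ (Fin d) → Fin d → Fin d → Fin d → ℝ)
    (Ric γ : EuclideanSpace ℝ (Fin d) → Fin d → Fin d → ℝ)
    (ς : EuclideanSpace ℝ (Fin d) → Fin d → ℝ)
    (f : EuclideanSpace ℝ (Fin d) → ℝ) (A B : Fin d) (x : EuclideanSpace ℝ (Fin d)) : ℝ :=
  covDDf Γ f A B x - (ς x A * pd f B x + ς x B * pd f A x)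
    + (-(covDσ Γ ς A B x + covDσ Γ ς B A x) / 2 + ς x A * ς x B
        - (1 / 2) * Ric x A B + Λ / ((n : ℝ) - 1) * γ x A B) * f x

namespace Aux8

variable {d : ℕ}

lemma pd_contDiff {f : EuclideanSpace ℝ (Fin d) → ℝ} (hf : ContDiff ℝ (⊤ : ℕ∞) f) (B : Fin d) :
    ContDiff ℝ (⊤ : ℕ∞) (fun y => pd f B y) := by
  unfold pd
  exact (hf.fderiv_right (by simp)).clm_apply contDiff_const

lemma pd_add {f g : EuclideanSpace ℝ (Fin d) → ℝ} {x} (hf : DifferentiableAt ℝ f x)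
    (hg : DifferentiableAt ℝ g x) (A : Fin d) :
    pd (fun y => f y + g y) A x = pd f A x + pd g A x := by
  simp [pd, fderiv_fun_add hf hg]

lemma pd_mul {f g : EuclideanSpace ℝ (Fin d) → ℝ} {x} (hf : DifferentiableAt ℝ f x)
    (hg : DifferentiableAt ℝ g x) (A : Fin d) :
    pd (fun y => f y * g y) A x = f x * pd g A x + g x * pd f A x := by
  simp [pd, fderiv_fun_mul hf hg]

lemma hess_symm {f : EuclideanSpace ℝ (Fin d) → ℝ} (hf : ContDiff ℝ (⊤ : ℕ∞) f) (A B : Fin d)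
    (x : EuclideanSpace ℝ (Fin d)) : hess f A B x = hess f B A x := by
  have hd : ∀ y, HasFDerivAt f (fderiv ℝ f y) y := fun y =>
    (hf.differentiable (by simp) y).hasFDerivAt
  have h1 : ContDiff ℝ (⊤ : ℕ∞) (fderiv ℝ f) := hf.fderiv_right (by simp)
  have h2 : HasFDerivAt (fderiv ℝ f) (fderiv ℝ (fderiv ℝ f) x) x :=
    (h1.differentiable (by simp) x).hasFDerivAt
  have hsymm := second_derivative_symmetric hd h2
  have key : ∀ C D : Fin d, hess f C D x =
      fderiv ℝ (fderiv ℝ f) x (EuclideanSpace.single C 1) (EuclideanSpace.single D 1) := by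
    intro C D
    have : hess f C D x = fderiv ℝ
        (fun y => (fderiv ℝ f y) (EuclideanSpace.single D 1)) x (EuclideanSpace.single C 1) := rfl
    rw [this, fderiv_clm_apply (h1.differentiable (by simp) x) (differentiableAt_const _)]
    simp
  rw [key, key, hsymm]

/-- The key pointwise identity: the master operator with shifted torsion applied to `φ·f`
equals `φ` times the master operator with torsion `ς` applied to `f`. -/
lemma master_shift (n : ℕ) (Λ : ℝ)
    (Γ : EuclideanSpace ℝ (Fin d) → Fin d → Fin d → Fin d → ℝ)
    (hΓ : ∀ x C A B, Γ x C A B = Γ x C B A)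
    (Ric γ : EuclideanSpace ℝ (Fin d) → Fin d → Fin d → ℝ)
    (ς : EuclideanSpace ℝ (Fin d) → Fin d → ℝ)
    (hς : ∀ A, ContDiff ℝ (⊤ : ℕ∞) fun y => ς y A)
    (f φ : EuclideanSpace ℝ (Fin d) → ℝ)
    (hf : ContDiff ℝ (⊤ : ℕ∞) f) (hφ : ContDiff ℝ (⊤ : ℕ∞) φ) (hφpos : ∀ x, 0 < φ x)
    (x : EuclideanSpace ℝ (Fin d)) (A B : Fin d) :
    master n Λ Γ Ric γ (fun y A => ς y A + pd φ A y / φ y) (fun y => φ y * f y) A B x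
      = φ x * master n Λ Γ Ric γ ς f A B x := by
  have hφ0 : ∀ y, φ y ≠ 0 := fun y => (hφpos y).ne'
  have hfd : ∀ y, DifferentiableAt ℝ f y := fun y => hf.differentiable (by simp) y
  have hφd : ∀ y, DifferentiableAt ℝ φ y := fun y => hφ.differentiable (by simp) y
  have hpdf : ∀ C y, DifferentiableAt ℝ (fun z => pd f C z) y := fun C y =>
    (pd_contDiff hf C).differentiable (by simp) y
  have hpdφ : ∀ C y, DifferentiableAt ℝ (fun z => pd φ C z) y := fun C y =>
    (pd_contDiff hφ C).differentiable (by simp) y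
  have hgc : ∀ C, ContDiff ℝ (⊤ : ℕ∞) (fun y => pd φ C y / φ y) := fun C =>
    (pd_contDiff hφ C).div hφ hφ0
  have hgd : ∀ C y, DifferentiableAt ℝ (fun z => pd φ C z / φ z) y := fun C y =>
    (hgc C).differentiable (by simp) y
  have hςd : ∀ C y, DifferentiableAt ℝ (fun z => ς z C) y := fun C y =>
    (hς C).differentiable (by simp) y
  -- derivative of the product φ·f
  have E1 : ∀ C y, pd (fun z => φ z * f z) C y = φ y * pd f C y + f y * pd φ C y :=
    fun C y => pd_mul (hφd y) (hfd y) C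
  -- Hessian of φ·f
  have E2 : hess (fun z => φ z * f z) A B x
      = φ x * hess f A B x + pd f B x * pd φ A x + f x * hess φ A B x
        + pd φ B x * pd f A x := by
    show pd (fun y => pd (fun z => φ z * f z) B y) A x = _
    have h : (fun y => pd (fun z => φ z * f z) B y)
        = (fun y => φ y * pd f B y + f y * pd φ B y) := funext (E1 B)
    rw [h, pd_add (f := fun y => φ y * pd f B y) (g := fun y => f y * pd φ B y) ((hφd x).mul (hpdf B x)) ((hfd x).mul (hpdφ B x)) A,
      pd_mul (hφd x) (hpdf B x) A, pd_mul (hfd x) (hpdφ B x) A]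
    show φ x * hess f A B x + pd f B x * pd φ A x
        + (f x * hess φ A B x + pd φ B x * pd f A x) = _
    ring
  -- derivative of φ⁻¹ dφ
  have E3 : ∀ A B : Fin d, pd (fun y => pd φ B y / φ y) A x
      = (hess φ A B x - (pd φ B x / φ x) * pd φ A x) / φ x := by
    intro A B
    have h : (fun y => pd φ B y) = (fun y => φ y * (pd φ B y / φ y)) :=
      funext fun y => by rw [eq_comm, mul_comm, div_mul_cancel₀ _ (hφ0 y)]
    have h2 : hess φ A B x = φ x * pd (fun y => pd φ B y / φ y) A x
        + (pd φ B x / φ x) * pd φ A x := by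
      show pd (fun y => pd φ B y) A x = _
      rw [h, pd_mul (hφd x) (hgd B x) A]
    have hφx : φ x ≠ 0 := hφ0 x
    rw [h2]
    field_simp
    ring
  -- derivative of the shifted torsion
  have E4 : ∀ A B : Fin d, pd (fun y => ς y B + pd φ B y / φ y) A x
      = pd (fun y => ς y B) A x
        + (hess φ A B x - (pd φ B x / φ x) * pd φ A x) / φ x := by
    intro A B
    rw [pd_add (hςd B x) (hgd B x) A, E3]
  -- sum rearrangements
  have S1 : ∀ A B : Fin d, (∑ C, Γ x C A B * (φ x * pd f C x + f x * pd φ C x))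
      = φ x * (∑ C, Γ x C A B * pd f C x) + f x * (∑ C, Γ x C A B * pd φ C x) := by
    intro A B
    rw [Finset.mul_sum, Finset.mul_sum, ← Finset.sum_add_distrib]
    exact Finset.sum_congr rfl fun C _ => by ring
  have S2 : ∀ A B : Fin d, (∑ C, Γ x C A B * (ς x C + pd φ C x / φ x))
      = (∑ C, Γ x C A B * ς x C) + (∑ C, Γ x C A B * pd φ C x) / φ x := by
    intro A B
    rw [Finset.sum_div, ← Finset.sum_add_distrib]
    exact Finset.sum_congr rfl fun C _ => by ring
  have hswap : ∀ C, Γ x C B A = Γ x C A B := fun C => hΓ x C B A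
  have hHφ : hess φ B A x = hess φ A B x := hess_symm hφ B A x
  simp only [master, covDDf, covDσ, E2, E4, E1, S1, S2, hswap, hHφ]
  set s1 := ∑ C, Γ x C A B * pd f C x
  set s2 := ∑ C, Γ x C A B * pd φ C x
  set s3 := ∑ C, Γ x C A B * ς x C
  set Hf := hess f A B x
  set Hφ := hess φ A B x
  set pfA := pd f A x
  set pfB := pd f B x
  set pφA := pd φ A x
  set pφB := pd φ B x
  have hφx : φ x ≠ 0 := hφ0 x
  field_simp
  ring

end Aux8

/-- Gauge covariance of the master/KID equation: under `ς ↦ ς̃ = ς + φ⁻¹dφ` (`φ > 0` smooth),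
`f` solves the master equation with torsion `ς` iff `f̃ = φ·f` solves it with torsion `ς̃`. -/
theorem stmt8 (n : ℕ) (hn : 3 ≤ n) (Λ : ℝ)
    (Γ : EuclideanSpace ℝ (Fin (n - 1)) → Fin (n - 1) → Fin (n - 1) → Fin (n - 1) → ℝ)
    (hΓ : ∀ x C A B, Γ x C A B = Γ x C B A)
    (Ric γ : EuclideanSpace ℝ (Fin (n - 1)) → Fin (n - 1) → Fin (n - 1) → ℝ)
    (ς : EuclideanSpace ℝ (Fin (n - 1)) → Fin (n - 1) → ℝ)
    (hς : ∀ A, ContDiff ℝ (⊤ : ℕ∞) fun y => ς y A)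
    (f φ : EuclideanSpace ℝ (Fin (n - 1)) → ℝ)
    (hf : ContDiff ℝ (⊤ : ℕ∞) f) (hφ : ContDiff ℝ (⊤ : ℕ∞) φ) (hφpos : ∀ x, 0 < φ x) :
    (∀ x A B, master n Λ Γ Ric γ ς f A B x = 0) ↔
      (∀ x A B, master n Λ Γ Ric γ (fun y A => ς y A + pd φ A y / φ y)
        (fun y => φ y * f y) A B x = 0) := by
  constructor
  · intro h x A B
    rw [Aux8.master_shift n Λ Γ hΓ Ric γ ς hς f φ hf hφ hφpos x A B, h x A B, mul_zero]
  · intro h x A B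
    have h2 := h x A B
    rw [Aux8.master_shift n Λ Γ hΓ Ric γ ς hς f φ hf hφ hφpos x A B] at h2
    exact (mul_eq_zero.mp h2).resolve_left (hφpos x).ne'
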